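/- Let S' ⊆ ℕ² be a local good semigroup with S' ≠ ℕ²(1,1) and suppose the Frobenius vector f(S') belongs to S'. Then S' has exactly one special parent, namely S = S' ∪ Δ(f(S')). -/

import Mathlib

/-- The ambient space `ℤ²`; `ℕ²` is identified with the nonnegative orthant. -/
abbrev Z2 : Type := ℤ × ℤ

/-- The nonnegative orthant, representing `ℕ² ⊆ ℤ²`. -/
def orth : Set Z2 := {a : Z2 | 0 ≤ a.1 ∧ 0 ≤ a.2}

/-- Property (G1): closure under componentwise minimum. -/
def MinClosed (E : Set Z2) : Prop := ∀ a ∈ E, ∀ b ∈ E, a ⊓ b ∈ E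

/-- Property (G3). -/
def G3P (E : Set Z2) : Prop :=
  ∀ a ∈ E, ∀ b ∈ E, a ≠ b →
    (a.1 = b.1 →
      ∃ e ∈ E, a.1 < e.1 ∧ min a.2 b.2 ≤ e.2 ∧ (a.2 ≠ b.2 → e.2 = min a.2 b.2)) ∧
    (a.2 = b.2 →
      ∃ e ∈ E, a.2 < e.2 ∧ min a.1 b.1 ≤ e.1 ∧ (a.1 ≠ b.1 → e.1 = min a.1 b.1))

/-- A good semigroup of `ℕ²` (viewed inside `ℤ²`). -/
def IsGood (S : Set Z2) : Prop :=
  S ⊆ orth ∧ (0 : Z2) ∈ S ∧ (∀ a ∈ S, ∀ b ∈ S, a + b ∈ S) ∧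
  MinClosed S ∧ (∃ δ : Z2, ∀ y : Z2, δ ≤ y → y ∈ S) ∧ G3P S

/-- A good semigroup is local if its only element with a zero coordinate is `0`. -/
def IsLocal (S : Set Z2) : Prop := ∀ a ∈ S, (a.1 = 0 ∨ a.2 = 0) → a = 0

/-- A relative good ideal of `S`. -/
def IsRelGoodIdeal (S E : Set Z2) : Prop :=
  E.Nonempty ∧ (∀ e ∈ E, ∀ s ∈ S, e + s ∈ E) ∧ (∃ a ∈ S, ∀ e ∈ E, a + e ∈ S) ∧
  MinClosed E ∧ G3P E

/-- A saturated chain of length `n` in `E`. -/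
def IsSatChain (E : Set Z2) (n : ℕ) (f : ℕ → Z2) : Prop :=
  (∀ i ≤ n, f i ∈ E) ∧ (∀ i < n, f i < f (i + 1)) ∧
  (∀ i < n, ∀ c ∈ E, ¬ (f i < c ∧ c < f (i + 1)))

/-- `d_E(a,b)`: the common length of all saturated chains in `E` from `a` to `b`. -/
noncomputable def chainDist (E : Set Z2) (a b : Z2) : ℕ :=
  sSup {n : ℕ | ∃ f : ℕ → Z2, IsSatChain E n f ∧ f 0 = a ∧ f n = b}

/-- The (componentwise) minimal element `e(E)` of `E`. -/
noncomputable def minEl (E : Set Z2) : Z2 :=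
  (sInf (Prod.fst '' E), sInf (Prod.snd '' E))

/-- The distance `d(E∖F)` between `F ⊆ E`: the common value of
`d_E(e(E),α) - d_F(e(F),α)` for all sufficiently large `α ∈ F`. -/
noncomputable def dist2 (E F : Set Z2) : ℤ :=
  sSup {z : ℤ | ∃ β : Z2, ∀ α ∈ F, β ≤ α →
    (chainDist E (minEl E) α : ℤ) - (chainDist F (minEl F) α : ℤ) = z}

/-- The conductor `c(E)`: the componentwise minimal `δ` with `δ + ℕ² ⊆ E`. -/
noncomputable def condE (E : Set Z2) : Z2 :=
  (sInf ((fun δ : Z2 => δ.1) '' {δ : Z2 | ∀ y : Z2, δ ≤ y → y ∈ E}),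
   sInf ((fun δ : Z2 => δ.2) '' {δ : Z2 | ∀ y : Z2, δ ≤ y → y ∈ E}))

/-- The conductor ideal `C(E) = {β ∈ E : β ≥ c(E)}`. -/
noncomputable def CIdeal (E : Set Z2) : Set Z2 := {b ∈ E | condE E ≤ b}

/-- The length `l(E) = d(E ∖ C(E))`. -/
noncomputable def glen (E : Set Z2) : ℤ := dist2 E (CIdeal E)

/-- The genus `g(E) = d(ℕ² ∖ E)`. -/
noncomputable def genus (E : Set Z2) : ℤ := dist2 orth E

/-- The good semigroup `ℕ²(1,1) = {0} ∪ ((1,1) + ℕ²)`. -/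
def N2oneone : Set Z2 := {a : Z2 | a = 0 ∨ ((1 : ℤ), (1 : ℤ)) ≤ a}
/-- The space `(ℕ ∪ {∞})²`, modelled inside `(ℤ ∪ {∞})²`. -/
abbrev Om : Type := WithTop ℤ × WithTop ℤ

/-- The embedding of `ℤ²` into `(ℤ ∪ {∞})²`. -/
def iotaZ (a : Z2) : Om := ((a.1 : WithTop ℤ), (a.2 : WithTop ℤ))

/-- `S^∞`: the elements `(a,∞)` with `(a,c₂) ∈ S` and `(∞,b)` with `(c₁,b) ∈ S`,
where `(c₁,c₂)` is the conductor of `S`. -/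
noncomputable def Sinf (S : Set Z2) : Set Om :=
  {w : Om | (∃ a : ℤ, w = ((a : WithTop ℤ), ⊤) ∧ (a, (condE S).2) ∈ S) ∨
            (∃ b : ℤ, w = (⊤, (b : WithTop ℤ)) ∧ ((condE S).1, b) ∈ S)}

/-- `Γ_S = S ∪ S^∞`. -/
noncomputable def Gam (S : Set Z2) : Set Om := iotaZ '' S ∪ Sinf S

/-- `I(S)`: the set of irreducible elements of `Γ_S`. -/
noncomputable def ISet (S : Set Z2) : Set Om :=
  {w ∈ Gam S | w ≠ 0 ∧ ∀ b ∈ Gam S, ∀ c ∈ Gam S, w = b + c → w = b ∨ w = c}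

/-- `Δ(a) = Δ₁(a) ∪ Δ₂(a)` for a finite element `a ∈ ℤ²`. -/
def DeltaUp (a : Z2) : Set Z2 :=
  {b : Z2 | (b.1 = a.1 ∧ a.2 < b.2) ∨ (b.2 = a.2 ∧ a.1 < b.1)}

/-- `A_f(S)`: the finite maximals of `S`, i.e. `a ∈ S` with `Δ^S(a) = ∅`. -/
def Af (S : Set Z2) : Set Z2 := {a ∈ S | S ∩ DeltaUp a = ∅}

/-- `I_A(S)`: the irreducible maximals, i.e. irreducible elements of
`A(S) = A_f(S) ∪ S^∞`. -/
noncomputable def IA (S : Set Z2) : Set Om := ISet S ∩ (iotaZ '' Af S ∪ Sinf S)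

/-- `₁Δ(w)` (as a subset of `ℤ²`), including the conventions for infinite `w`. -/
def lowD1 (w : Om) : Set Z2 :=
  {b : Z2 | (b.1 : WithTop ℤ) = w.1 ∧ (b.2 : WithTop ℤ) < w.2}

/-- `₂Δ(w)` (as a subset of `ℤ²`), including the conventions for infinite `w`. -/
def lowD2 (w : Om) : Set Z2 :=
  {b : Z2 | (b.2 : WithTop ℤ) = w.2 ∧ (b.1 : WithTop ℤ) < w.1}

/-- `Δ(w)` (as a subset of `ℤ²`) for a possibly infinite `w`. -/
def upD (w : Om) : Set Z2 :=
  {b : Z2 | ((b.1 : WithTop ℤ) = w.1 ∧ w.2 < (b.2 : WithTop ℤ)) ∨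
            ((b.2 : WithTop ℤ) = w.2 ∧ w.1 < (b.1 : WithTop ℤ))}

/-- `{w} ∩ ℤ²`: the singleton of `w` if `w` is finite, `∅` otherwise. -/
def finPart (w : Om) : Set Z2 := {b : Z2 | iotaZ b = w}

/-- `a` and `b` are connected by a piece of track. -/
def Piece (S : Set Z2) (a b : Om) : Prop :=
  ¬ a ≤ b ∧ ¬ b ≤ a ∧ ∀ s ∈ S, s ∈ upD (a ⊓ b) → iotaZ s ∈ ISet S

/-- The data `α 0, …, α (n-1)` of a track of `S` (with `n ≥ 1` points;
`n = 1` gives the one-point tracks `T((α))`). -/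
def TrackData (S : Set Z2) (n : ℕ) (α : ℕ → Om) : Prop :=
  1 ≤ n ∧ (∀ i < n, α i ∈ IA S) ∧
  (∀ i j, i < j → j < n → (α i).1 < (α j).1) ∧
  (∀ s ∈ S, s ∈ lowD2 (α 0) → iotaZ s ∈ ISet S) ∧
  (∀ s ∈ S, s ∈ lowD1 (α (n - 1)) → iotaZ s ∈ ISet S) ∧
  (∀ i, i + 1 < n → Piece S (α i) (α (i + 1)))

/-- The track `T((α 0,…,α (n-1)))` as a subset of `S`. -/
def trackSet (S : Set Z2) (n : ℕ) (α : ℕ → Om) : Set Z2 :=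
  finPart (α 0) ∪ S ∩ lowD2 (α 0) ∪
  (⋃ i ∈ Finset.range (n - 1), S ∩ upD (α i ⊓ α (i + 1))) ∪
  S ∩ lowD1 (α (n - 1)) ∪ finPart (α (n - 1))

/-- `T` is a track of `S`. -/
def IsTrack (S T : Set Z2) : Prop :=
  ∃ (n : ℕ) (α : ℕ → Om), TrackData S n α ∧ T = trackSet S n α

/-- `T` is a beyond track of `S`: a track meeting `{a ∈ S : a ≥ c(S)}`. -/
noncomputable def IsBeyondTrack (S T : Set Z2) : Prop :=
  IsTrack S T ∧ (T ∩ {a ∈ S | condE S ≤ a}).Nonempty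

/-- `S` is a special parent of `S'`: `S` is a (local) good semigroup and
`S' = S ∖ T` for some beyond track `T` of `S`. -/
noncomputable def SpecialParent (S S' : Set Z2) : Prop :=
  IsGood S ∧ IsLocal S ∧ ∃ T : Set Z2, IsBeyondTrack S T ∧ S' = S \ T

/-!
Write `f = f(S')`. A point of `Δ(f)` in `S'` would give `S'` a smaller conductor, while every other
point `≥ f` lies in `S'`; hence `S' ∪ Δ(f) = S' ∪ (f + ℕ²)`, which is again a local good semigroup.
Its infinite maximals `(f₁, ∞)` and `(∞, f₂)` are irreducible, and the track joining them is
exactly `Δ(f)`, which reaches beyond the conductor: so `S' ∪ Δ(f)` is a special parent.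

Conversely, let `S' = S ∖ T` for a beyond track `T` of `S`. Then `c(S) ≤ c(S')` with equality
excluded, say `c(S)₂ < c(S')₂`. The ray `{(x, f₂) : x ≥ c(S')₁}` lies in `S ∖ S' ⊆ T`; since finite
maximals lie strictly below `c(S)`, this forces the last point of the track to be `(∞, f₂)`, the one
before it to be some `(K, ∞)`, and no others, so `T = S ∩ Δ(K, f₂)`. If `K < f₁`, axiom (G3) in
`S'` for `(K, f₂)` and `f` would produce a point of `T` in `S'`; so `K = f₁` and `S = S' ∪ Δ(f)`.
-/

section Conductor

variable {E S : Set Z2}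

lemma bddBelow_image_conductorBounds (hE : E ⊆ orth) (g : Z2 → ℤ)
    (hg : ∀ a ∈ orth, 0 ≤ g a) : BddBelow (g '' {δ : Z2 | ∀ y, δ ≤ y → y ∈ E}) := by
  refine ⟨0, ?_⟩
  rintro _ ⟨δ, hδ, rfl⟩
  exact hg _ (hE (hδ δ le_rfl))

lemma condE_le_of_forall_le_mem (hE : E ⊆ orth) {δ : Z2} (hδ : ∀ y, δ ≤ y → y ∈ E) :
    condE E ≤ δ :=
  Prod.le_def.2
    ⟨csInf_le (bddBelow_image_conductorBounds hE _ fun _ ha => ha.1) (Set.mem_image_of_mem _ hδ),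
      csInf_le (bddBelow_image_conductorBounds hE _ fun _ ha => ha.2) (Set.mem_image_of_mem _ hδ)⟩

lemma mem_of_condE_le (hS : IsGood S) {y : Z2} (hy : condE S ≤ y) : y ∈ S := by
  set C := {δ : Z2 | ∀ y, δ ≤ y → y ∈ S}
  have hinf : ∀ δ ∈ C, ∀ δ' ∈ C, δ ⊓ δ' ∈ C := fun δ hδ δ' hδ' y hy => by
    rw [← sup_eq_left.2 hy, sup_inf_left]
    exact hS.2.2.2.1 _ (hδ _ le_sup_right) _ (hδ' _ le_sup_right)
  have hne : C.Nonempty := hS.2.2.2.2.1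
  have hbdd := bddBelow_image_conductorBounds hS.1
  obtain ⟨a, ha, ha1⟩ := Int.csInf_mem (hne.image _) (hbdd Prod.fst fun a ha => ha.1)
  obtain ⟨b, hb, hb2⟩ := Int.csInf_mem (hne.image _) (hbdd Prod.snd fun a ha => ha.2)
  have hab : condE S = a ⊓ b := by
    have h1 : a.1 ≤ b.1 := ha1 ▸ csInf_le (hbdd Prod.fst fun a ha => ha.1) ⟨b, hb, rfl⟩
    have h2 : b.2 ≤ a.2 := hb2 ▸ csInf_le (hbdd Prod.snd fun a ha => ha.2) ⟨a, ha, rfl⟩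
    refine Prod.ext ?_ ?_
    · change sInf (Prod.fst '' C) = min a.1 b.1
      rw [← ha1, min_eq_left h1]
    · change sInf (Prod.snd '' C) = min a.2 b.2
      rw [← hb2, min_eq_right h2]
  exact hinf a ha b hb y (hab ▸ hy)

lemma mk_mem_of_condE_le (hS : IsGood S) {x y : ℤ} (hx : (condE S).1 ≤ x)
    (hy : (condE S).2 ≤ y) : (x, y) ∈ S :=
  mem_of_condE_le hS ⟨hx, hy⟩

lemma condE_le_condE_of_subset {S' : Set Z2} (hS' : IsGood S') (hsub : S' ⊆ S)
    (hS : S ⊆ orth) : condE S ≤ condE S' :=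
  condE_le_of_forall_le_mem hS fun _ hy => hsub (mem_of_condE_le hS' hy)

end Conductor

section G3

variable {E : Set Z2} {a b : Z2}

lemma G3P.exists_right (h : G3P E) (ha : a ∈ E) (hb : b ∈ E) (h1 : a.1 = b.1)
    (h2 : a.2 < b.2) : ∃ e ∈ E, a.1 < e.1 ∧ e.2 = a.2 := by
  obtain ⟨e, he, he1, -, he2⟩ := (h a ha b hb fun hab => h2.ne (congrArg Prod.snd hab)).1 h1
  exact ⟨e, he, he1, by rw [he2 h2.ne, min_eq_left h2.le]⟩

lemma G3P.exists_above (h : G3P E) (ha : a ∈ E) (hb : b ∈ E) (h2 : a.2 = b.2)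
    (h1 : a.1 < b.1) : ∃ e ∈ E, a.2 < e.2 ∧ e.1 = a.1 := by
  obtain ⟨e, he, he2, -, he1⟩ := (h a ha b hb fun hab => h1.ne (congrArg Prod.fst hab)).2 h2
  exact ⟨e, he, he2, by rw [he1 h1.ne, min_eq_left h1.le]⟩

lemma G3P.of_exists
    (hright : ∀ a ∈ E, ∀ b ∈ E, a.1 = b.1 → a.2 < b.2 → ∃ e ∈ E, a.1 < e.1 ∧ e.2 = a.2)
    (habove : ∀ a ∈ E, ∀ b ∈ E, a.2 = b.2 → a.1 < b.1 → ∃ e ∈ E, a.2 < e.2 ∧ e.1 = a.1) :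
    G3P E := by
  intro a ha b hb hab
  refine ⟨fun h1 => ?_, fun h2 => ?_⟩
  · rcases lt_or_gt_of_ne fun h2 => hab (Prod.ext h1 h2) with h2 | h2
    · obtain ⟨e, he, he1, he2⟩ := hright a ha b hb h1 h2
      exact ⟨e, he, he1, by omega, fun _ => by omega⟩
    · obtain ⟨e, he, he1, he2⟩ := hright b hb a ha h1.symm h2
      exact ⟨e, he, by omega, by omega, fun _ => by omega⟩
  · rcases lt_or_gt_of_ne fun h1 => hab (Prod.ext h1 h2) with h1 | h1
    · obtain ⟨e, he, he2, he1⟩ := habove a ha b hb h2 h1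
      exact ⟨e, he, he2, by omega, fun _ => by omega⟩
    · obtain ⟨e, he, he2, he1⟩ := habove b hb a ha h2.symm h1
      exact ⟨e, he, by omega, by omega, fun _ => by omega⟩

end G3

lemma IsLocal.one_le_of_mem {S : Set Z2} (hl : IsLocal S) (hS : S ⊆ orth) {a : Z2} (ha : a ∈ S)
    (h0 : a ≠ 0) : 1 ≤ a.1 ∧ 1 ≤ a.2 := by
  have h1 : a.1 ≠ 0 := fun h => h0 (hl a ha (Or.inl h))
  have h2 : a.2 ≠ 0 := fun h => h0 (hl a ha (Or.inr h))
  obtain ⟨h1', h2'⟩ := hS ha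
  exact ⟨by omega, by omega⟩

namespace IsGood

variable {S : Set Z2}

lemma mem_column_of_le (hS : IsGood S) {a y₀ y : ℤ} (ha : (a, y₀) ∈ S) (hy₀ : (condE S).2 ≤ y₀)
    (hy : y₀ ≤ y) : (a, y) ∈ S := by
  induction y, hy using Int.leInduction with
  | base => exact ha
  | succ y hy ih =>
    set X := max (a + 1) (condE S).1
    obtain ⟨e, he, he2, he1⟩ := hS.2.2.2.2.2.exists_above ih
      (mk_mem_of_condE_le hS (le_max_right _ _) (by omega) : (X, y) ∈ S) rfl (by simp [X])
    have hmin := hS.2.2.2.1 e he (X, y + 1) (mk_mem_of_condE_le hS (le_max_right _ _) (by omega))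
    have heq : e ⊓ (X, y + 1) = (a, y + 1) := by
      simp only at he1 he2
      ext <;> simp [he1, X]; omega
    rwa [heq] at hmin

lemma mem_row_of_le (hS : IsGood S) {b x₀ x : ℤ} (hb : (x₀, b) ∈ S) (hx₀ : (condE S).1 ≤ x₀)
    (hx : x₀ ≤ x) : (x, b) ∈ S := by
  induction x, hx using Int.leInduction with
  | base => exact hb
  | succ x hx ih =>
    set Y := max (b + 1) (condE S).2
    obtain ⟨e, he, he1, he2⟩ := hS.2.2.2.2.2.exists_right ih
      (mk_mem_of_condE_le hS (by omega) (le_max_right _ _) : (x, Y) ∈ S) rfl (by simp [Y])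
    have hmin := hS.2.2.2.1 e he (x + 1, Y) (mk_mem_of_condE_le hS (by omega) (le_max_right _ _))
    have heq : e ⊓ (x + 1, Y) = (x + 1, b) := by
      simp only at he1 he2
      ext <;> simp [he2, Y]; omega
    rwa [heq] at hmin

lemma lt_condE_of_mem_Af (hS : IsGood S) {a : Z2} (ha : a ∈ Af S) :
    a.1 < (condE S).1 ∧ a.2 < (condE S).2 := by
  have hempty : ∀ p ∈ S, p ∉ DeltaUp a := fun p hp hpa =>
    (Set.eq_empty_iff_forall_notMem.1 ha.2) p ⟨hp, hpa⟩
  constructor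
  · by_contra! h
    exact hempty _ (mk_mem_of_condE_le hS h (le_max_right (a.2 + 1) _))
      (Or.inl ⟨rfl, by simp⟩)
  · by_contra! h
    exact hempty _ (mk_mem_of_condE_le hS (le_max_right (a.1 + 1) _) h)
      (Or.inr ⟨rfl, by simp⟩)

lemma mk_condE_fst_sub_one_notMem (hS : IsGood S) {y : ℤ} (hy : (condE S).2 ≤ y) :
    ((condE S).1 - 1, y) ∉ S := by
  intro hmem
  have := condE_le_of_forall_le_mem hS.1 fun z (hz : ((condE S).1 - 1, y) ≤ z) => by
    obtain ⟨hz1, hz2⟩ := hz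
    rcases hz1.eq_or_lt with h | h
    · exact (show z = ((condE S).1 - 1, z.2) from Prod.ext h.symm rfl) ▸
        hS.mem_column_of_le hmem hy hz2
    · exact mk_mem_of_condE_le hS (by simp at h; omega) (by simp at hz2; omega)
  simp [Prod.le_def] at this

lemma mk_condE_snd_sub_one_notMem (hS : IsGood S) {x : ℤ} (hx : (condE S).1 ≤ x) :
    (x, (condE S).2 - 1) ∉ S := by
  intro hmem
  have := condE_le_of_forall_le_mem hS.1 fun z (hz : (x, (condE S).2 - 1) ≤ z) => by
    obtain ⟨hz1, hz2⟩ := hz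
    rcases hz2.eq_or_lt with h | h
    · exact (show z = (z.1, (condE S).2 - 1) from Prod.ext rfl h.symm) ▸
        hS.mem_row_of_le hmem hx hz1
    · exact mk_mem_of_condE_le hS (by simp at hz1; omega) (by simp at h; omega)
  simp [Prod.le_def] at this

end IsGood

noncomputable def frobeniusVec (S : Set Z2) : Z2 := condE S - ((1 : ℤ), (1 : ℤ))

section Frobenius

variable {S : Set Z2}

@[simp] lemma frobeniusVec_fst : (frobeniusVec S).1 = (condE S).1 - 1 := rfl

@[simp] lemma frobeniusVec_snd : (frobeniusVec S).2 = (condE S).2 - 1 := rfl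

lemma IsGood.mem_of_frobeniusVec_lt (hS : IsGood S) {z : Z2} (h1 : (frobeniusVec S).1 < z.1)
    (h2 : (frobeniusVec S).2 < z.2) : z ∈ S :=
  mem_of_condE_le hS ⟨by simp at h1; omega, by simp at h2; omega⟩

lemma IsGood.disjoint_deltaUp_frobeniusVec (hS : IsGood S) :
    Disjoint S (DeltaUp (frobeniusVec S)) := by
  rw [Set.disjoint_left]
  rintro ⟨x, y⟩ hmem (⟨hx, hy⟩ | ⟨hy, hx⟩)
  · simp only [frobeniusVec_fst, frobeniusVec_snd] at hx hy
    exact hS.mk_condE_fst_sub_one_notMem (y := y) (by omega) (hx ▸ hmem)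
  · simp only [frobeniusVec_fst, frobeniusVec_snd] at hx hy
    exact hS.mk_condE_snd_sub_one_notMem (x := x) (by omega) (hy ▸ hmem)

lemma IsGood.frobeniusVec_ne_zero (hS : IsGood S) (hl : IsLocal S) (hne : S ≠ N2oneone) :
    frobeniusVec S ≠ 0 := by
  intro h0
  have hc : condE S = ((1 : ℤ), (1 : ℤ)) := by
    simpa [frobeniusVec, sub_eq_zero] using h0
  refine hne (Set.ext fun a => ⟨fun ha => ?_, ?_⟩)
  · by_cases ha0 : a = 0
    · exact Or.inl ha0
    · exact Or.inr (Prod.le_def.2 (hl.one_le_of_mem hS.1 ha ha0))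
  · rintro (rfl | ha)
    · exact hS.2.1
    · exact mem_of_condE_le hS (hc ▸ ha)

end Frobenius

section Gamma

variable {S : Set Z2} {w : Om}

lemma upD_iotaZ (a : Z2) : upD (iotaZ a) = DeltaUp a := by
  ext z
  simp [upD, DeltaUp, iotaZ]

lemma mk_mem_of_mem_Gam (hw : w ∈ Gam S) {p q : ℤ} (h1 : w.1 = p) (h2 : w.2 = q) :
    (p, q) ∈ S ∧ w = iotaZ (p, q) := by
  rcases hw with ⟨u, hu, rfl⟩ | ⟨x, rfl, -⟩ | ⟨y, rfl, -⟩
  · simp only [iotaZ, WithTop.coe_inj] at h1 h2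
    subst h1 h2
    exact ⟨hu, rfl⟩
  · simp at h2
  · simp at h1

lemma mk_mem_of_mem_Gam_of_snd_eq_top (hw : w ∈ Gam S) {p : ℤ} (h1 : w.1 = p) (h2 : w.2 = ⊤) :
    (p, (condE S).2) ∈ S := by
  rcases hw with ⟨u, -, rfl⟩ | ⟨x, rfl, hx⟩ | ⟨y, rfl, -⟩
  · simp [iotaZ] at h2
  · simp only [WithTop.coe_inj] at h1
    exact h1 ▸ hx
  · simp at h1

lemma mk_mem_of_mem_Gam_of_fst_eq_top (hw : w ∈ Gam S) {q : ℤ} (h1 : w.1 = ⊤) (h2 : w.2 = q) :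
    ((condE S).1, q) ∈ S := by
  rcases hw with ⟨u, -, rfl⟩ | ⟨x, rfl, -⟩ | ⟨y, rfl, hy⟩
  · simp [iotaZ] at h1
  · simp at h2
  · simp only [WithTop.coe_inj] at h2
    exact h2 ▸ hy

lemma exists_eq_add_of_iotaZ_eq_add {β γ : Om} (hβ : β ∈ Gam S) (hγ : γ ∈ Gam S) {s : Z2}
    (h : iotaZ s = β + γ) : ∃ u ∈ S, ∃ v ∈ S, β = iotaZ u ∧ γ = iotaZ v ∧ s = u + v := by
  obtain ⟨p, q, hp, hq, hpq⟩ := WithTop.add_eq_coe.1 (congrArg Prod.fst h).symm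
  obtain ⟨p', q', hp', hq', hpq'⟩ := WithTop.add_eq_coe.1 (congrArg Prod.snd h).symm
  obtain ⟨hu, rfl⟩ := mk_mem_of_mem_Gam hβ hp.symm hp'.symm
  obtain ⟨hv, rfl⟩ := mk_mem_of_mem_Gam hγ hq.symm hq'.symm
  exact ⟨_, hu, _, hv, rfl, rfl, Prod.ext hpq.symm hpq'.symm⟩

lemma IsGood.exists_mk_mem_ne_zero_of_mem_Gam_of_fst_eq (hS : IsGood S) (hw : w ∈ Gam S)
    (h0 : w ≠ 0) {q : ℤ} (h1 : w.1 = q) : ∃ y, (q, y) ∈ S ∧ (q, y) ≠ 0 := by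
  rcases hw with ⟨⟨a, b⟩, hu, rfl⟩ | ⟨x, rfl, hx⟩ | ⟨y, rfl, -⟩
  · simp only [iotaZ, WithTop.coe_inj] at h1
    subst h1
    exact ⟨b, hu, fun h => h0 (by rw [h]; rfl)⟩
  · simp only [WithTop.coe_inj] at h1
    have hc := (hS.1 (mem_of_condE_le hS le_rfl)).2
    exact ⟨(condE S).2 + 1, hS.mem_column_of_le (h1 ▸ hx) le_rfl (by omega),
      ne_of_apply_ne Prod.snd (by simp; omega)⟩
  · simp at h1

lemma IsGood.exists_mk_mem_ne_zero_of_mem_Gam_of_snd_eq (hS : IsGood S) (hw : w ∈ Gam S)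
    (h0 : w ≠ 0) {q : ℤ} (h2 : w.2 = q) : ∃ x, (x, q) ∈ S ∧ (x, q) ≠ 0 := by
  rcases hw with ⟨⟨a, b⟩, hu, rfl⟩ | ⟨x, rfl, -⟩ | ⟨y, rfl, hy⟩
  · simp only [iotaZ, WithTop.coe_inj] at h2
    subst h2
    exact ⟨a, hu, fun h => h0 (by rw [h]; rfl)⟩
  · simp at h2
  · simp only [WithTop.coe_inj] at h2
    have hc := (hS.1 (mem_of_condE_le hS le_rfl)).1
    exact ⟨(condE S).1 + 1, hS.mem_row_of_le (h2 ▸ hy) le_rfl (by omega),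
      ne_of_apply_ne Prod.fst (by simp; omega)⟩

end Gamma

section Track

variable {S : Set Z2} {n : ℕ} {α : ℕ → Om}

lemma IsGood.fst_eq_top_or_snd_eq_top_of_mem_IA (hS : IsGood S) {w : Om} (hw : w ∈ IA S)
    (h : ((condE S).1 : WithTop ℤ) ≤ w.1 ∨ ((condE S).2 : WithTop ℤ) ≤ w.2) :
    w.1 = ⊤ ∨ w.2 = ⊤ := by
  rcases hw.2 with ⟨a, ha, rfl⟩ | ⟨x, rfl, -⟩ | ⟨y, rfl, -⟩
  · have := hS.lt_condE_of_mem_Af ha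
    simp only [iotaZ, WithTop.coe_le_coe] at h
    omega
  · exact Or.inr rfl
  · exact Or.inl rfl

lemma TrackData.snd_lt (h : TrackData S n α) {i : ℕ} (hi : i + 1 < n) :
    (α (i + 1)).2 < (α i).2 := by
  obtain ⟨hnle, -, -⟩ := h.2.2.2.2.2 i hi
  exact lt_of_not_ge fun h2 => hnle (Prod.le_def.2 ⟨(h.2.2.1 i (i + 1) i.lt_succ_self hi).le, h2⟩)

lemma TrackData.eq_sub_one_of_fst_eq_top (h : TrackData S n α) {i : ℕ} (hi : i < n)
    (htop : (α i).1 = ⊤) : i = n - 1 := by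
  by_contra hne
  have := h.2.2.1 i (n - 1) (by omega) (by omega)
  rw [htop] at this
  exact not_top_lt this

lemma TrackData.eq_zero_of_snd_eq_top (h : TrackData S n α) {i : ℕ} (hi : i < n)
    (htop : (α i).2 = ⊤) : i = 0 := by
  by_contra hne
  have := h.snd_lt (i := i - 1) (by omega)
  rw [Nat.sub_add_cancel (by omega), htop] at this
  exact not_top_lt this

lemma TrackData.exists_coord_eq_of_mem_trackSet (h : TrackData S n α) {z : Z2}
    (hz : z ∈ trackSet S n α) :
    ∃ i < n, (z.1 : WithTop ℤ) = (α i).1 ∨ (z.2 : WithTop ℤ) = (α i).2 := by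
  have h1 := h.1
  rcases hz with ((((hz | hz) | hz) | hz) | hz)
  · exact ⟨0, h1, Or.inl (congrArg Prod.fst hz)⟩
  · exact ⟨0, h1, Or.inr hz.2.1⟩
  · simp only [Set.mem_iUnion, Finset.mem_range] at hz
    obtain ⟨i, hi, -, hz⟩ := hz
    rcases hz with ⟨hz, -⟩ | ⟨hz, -⟩
    · rcases min_choice (α i).1 (α (i + 1)).1 with hm | hm
      · exact ⟨i, by omega, Or.inl (hz.trans hm)⟩
      · exact ⟨i + 1, by omega, Or.inl (hz.trans hm)⟩
    · rcases min_choice (α i).2 (α (i + 1)).2 with hm | hm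
      · exact ⟨i, by omega, Or.inr (hz.trans hm)⟩
      · exact ⟨i + 1, by omega, Or.inr (hz.trans hm)⟩
  · exact ⟨n - 1, by omega, Or.inl hz.2.1⟩
  · exact ⟨n - 1, by omega, Or.inl (congrArg Prod.fst hz)⟩

lemma trackSet_two_eq {x y : ℤ} (h0 : α 0 = ((x : WithTop ℤ), ⊤))
    (h1 : α 1 = (⊤, (y : WithTop ℤ))) : trackSet S 2 α = S ∩ DeltaUp (x, y) := by
  ext z
  simp [trackSet, finPart, lowD1, lowD2, upD, DeltaUp, iotaZ, h0, h1]

lemma exists_ge_forall_coe_ne (g : ℕ → WithTop ℤ) (n : ℕ) (x₀ : ℤ) :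
    ∃ x ≥ x₀, ∀ i < n, g i ≠ x := by
  obtain ⟨x, hx, hxs⟩ := (Set.Ici_infinite x₀).exists_notMem_finset
    ((Finset.range n).image fun i => WithTop.untopD x₀ (g i))
  exact ⟨x, hx, fun i hi hgi => hxs (Finset.mem_image.2 ⟨i, Finset.mem_range.2 hi, by simp [hgi]⟩)⟩

lemma TrackData.last_eq_of_row_subset (hS : IsGood S) (h : TrackData S n α) {b x₀ : ℤ}
    (hb : (condE S).2 ≤ b) (hrow : ∀ x ≥ x₀, (x, b) ∈ trackSet S n α) :
    α (n - 1) = (⊤, (b : WithTop ℤ)) := by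
  obtain ⟨x, hx, hfresh⟩ := exists_ge_forall_coe_ne (fun i => (α i).1) n x₀
  obtain ⟨i, hi, hxi | hbi⟩ := h.exists_coord_eq_of_mem_trackSet (hrow x hx)
  · exact absurd hxi.symm (hfresh i hi)
  have htop : (α i).1 = ⊤ := by
    refine (hS.fst_eq_top_or_snd_eq_top_of_mem_IA (h.2.1 i hi)
      (Or.inr (hbi ▸ WithTop.coe_le_coe.2 hb))).resolve_right fun h' => ?_
    simp [h'] at hbi
  obtain rfl := h.eq_sub_one_of_fst_eq_top hi htop
  exact Prod.ext htop hbi.symm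

lemma TrackData.first_eq_of_column_subset (hS : IsGood S) (h : TrackData S n α) {a y₀ : ℤ}
    (ha : (condE S).1 ≤ a) (hcol : ∀ y ≥ y₀, (a, y) ∈ trackSet S n α) :
    α 0 = ((a : WithTop ℤ), ⊤) := by
  obtain ⟨y, hy, hfresh⟩ := exists_ge_forall_coe_ne (fun i => (α i).2) n y₀
  obtain ⟨i, hi, hai | hyi⟩ := h.exists_coord_eq_of_mem_trackSet (hcol y hy)
  swap
  · exact absurd hyi.symm (hfresh i hi)
  have htop : (α i).2 = ⊤ := by
    refine (hS.fst_eq_top_or_snd_eq_top_of_mem_IA (h.2.1 i hi)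
      (Or.inl (hai ▸ WithTop.coe_le_coe.2 ha))).resolve_left fun h' => ?_
    simp [h'] at hai
  obtain rfl := h.eq_zero_of_snd_eq_top hi htop
  exact Prod.ext hai.symm htop

lemma TrackData.two_points_of_last (hS : IsGood S) (h : TrackData S n α) {a b : ℤ}
    (hb : (condE S).2 ≤ b) (hlast : α (n - 1) = (⊤, (b : WithTop ℤ)))
    (hab : (a, b) ∈ S \ trackSet S n α) : n = 2 ∧ ∃ K : ℤ, α 0 = ((K : WithTop ℤ), ⊤) := by
  have hn : n ≠ 1 := by
    rintro rfl
    exact hab.2 (Or.inl (Or.inl (Or.inl (Or.inr ⟨hab.1, by simp_all [lowD2]⟩))))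
  have hn2 : 2 ≤ n := by have := h.1; omega
  have hlt := h.snd_lt (i := n - 2) (by omega)
  rw [show n - 2 + 1 = n - 1 by omega, hlast] at hlt
  have hfin : (α (n - 2)).1 ≠ ⊤ := (h.2.2.1 (n - 2) (n - 1) (by omega) (by omega)).ne_top
  have htop : (α (n - 2)).2 = ⊤ := (hS.fst_eq_top_or_snd_eq_top_of_mem_IA (h.2.1 _ (by omega))
    (Or.inr ((WithTop.coe_le_coe.2 hb).trans hlt.le))).resolve_left hfin
  have h0 := h.eq_zero_of_snd_eq_top (by omega) htop
  rw [h0] at hfin htop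
  obtain ⟨K, hK⟩ := WithTop.ne_top_iff_exists.1 hfin
  exact ⟨by omega, K, Prod.ext hK.symm htop⟩

lemma TrackData.two_points_of_first (hS : IsGood S) (h : TrackData S n α) {a b : ℤ}
    (ha : (condE S).1 ≤ a) (hfirst : α 0 = ((a : WithTop ℤ), ⊤))
    (hab : (a, b) ∈ S \ trackSet S n α) : n = 2 ∧ ∃ K : ℤ, α 1 = (⊤, (K : WithTop ℤ)) := by
  have hn : n ≠ 1 := by
    rintro rfl
    exact hab.2 (Or.inl (Or.inr ⟨hab.1, by simp_all [lowD1]⟩))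
  have hn2 : 2 ≤ n := by have := h.1; omega
  have hlt := h.2.2.1 0 1 (by omega) (by omega)
  rw [hfirst] at hlt
  have hfin : (α 1).2 ≠ ⊤ := (h.snd_lt (i := 0) (by omega)).ne_top
  have htop : (α 1).1 = ⊤ := (hS.fst_eq_top_or_snd_eq_top_of_mem_IA (h.2.1 _ (by omega))
    (Or.inl ((WithTop.coe_le_coe.2 ha).trans hlt.le))).resolve_right hfin
  have h1 := h.eq_sub_one_of_fst_eq_top (by omega) htop
  obtain ⟨K, hK⟩ := WithTop.ne_top_iff_exists.1 hfin
  exact ⟨by omega, K, Prod.ext htop hK.symm⟩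

end Track

section Parent

variable {S' : Set Z2}

lemma union_deltaUp_frobeniusVec_eq_union_Ici (hS' : IsGood S') (hf : frobeniusVec S' ∈ S') :
    S' ∪ DeltaUp (frobeniusVec S') = S' ∪ Set.Ici (frobeniusVec S') := by
  set f := frobeniusVec S'
  ext z
  constructor
  · rintro (hz | hz)
    · exact Or.inl hz
    · exact Or.inr (Prod.le_def.2 (by rcases hz with h | h <;> omega))
  · rintro (hz | hz)
    · exact Or.inl hz
    rw [Set.mem_Ici, Prod.le_def] at hz
    by_cases hzf : z = f
    · exact Or.inl (hzf ▸ hf)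
    by_cases h : f.1 < z.1 ∧ f.2 < z.2
    · exact Or.inl (hS'.mem_of_frobeniusVec_lt h.1 h.2)
    · have hzf' : ¬(z.1 = f.1 ∧ z.2 = f.2) := fun h => hzf (Prod.ext h.1 h.2)
      right
      simp only [DeltaUp, Set.mem_ofPred_eq]
      omega

lemma inf_mem_union_Ici (hS' : IsGood S') (hf : frobeniusVec S' ∈ S') {a b : Z2}
    (ha : a ∈ S' ∪ Set.Ici (frobeniusVec S')) (hb : b ∈ S' ∪ Set.Ici (frobeniusVec S')) :
    a ⊓ b ∈ S' ∪ Set.Ici (frobeniusVec S') := by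
  set f := frobeniusVec S'
  have hc : ∀ z : Z2, f.1 < z.1 → f.2 < z.2 → z ∈ S' := fun _ => hS'.mem_of_frobeniusVec_lt
  have key : ∀ a ∈ S', ∀ b, f ≤ b → a ⊓ b ∈ S' ∪ Set.Ici f := by
    intro a ha b hb
    have : a ⊓ b = a ⊓ (max b.1 (f.1 + 1), max b.2 (f.2 + 1)) ∨ a ⊓ b = a ⊓ f ∨ f ≤ a ⊓ b := by
      simp only [Prod.ext_iff, Prod.le_def, Prod.fst_inf, Prod.snd_inf] at hb ⊢
      omega
    rcases this with h | h | h
    · rw [h]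
      exact Or.inl (hS'.2.2.2.1 _ ha _ (hc _ (by dsimp only; omega) (by dsimp only; omega)))
    · rw [h]
      exact Or.inl (hS'.2.2.2.1 _ ha _ hf)
    · exact Or.inr h
  rcases ha with ha | ha <;> rcases hb with hb | hb
  · exact Or.inl (hS'.2.2.2.1 a ha b hb)
  · exact key a ha b hb
  · rw [inf_comm]
    exact key b hb a ha
  · exact Or.inr (Set.mem_Ici.2 (le_inf ha hb))

lemma add_mem_union_Ici (hS' : IsGood S') (hl' : IsLocal S') (hf : frobeniusVec S' ∈ S')
    (hf0 : frobeniusVec S' ≠ 0) {a b : Z2} (ha : a ∈ S' ∪ Set.Ici (frobeniusVec S'))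
    (hb : b ∈ S' ∪ Set.Ici (frobeniusVec S')) : a + b ∈ S' ∪ Set.Ici (frobeniusVec S') := by
  set f := frobeniusVec S'
  have hf1 := hl'.one_le_of_mem hS'.1 hf hf0
  have hc : ∀ z : Z2, f.1 < z.1 → f.2 < z.2 → z ∈ S' := fun _ => hS'.mem_of_frobeniusVec_lt
  have hadd : ∀ a ∈ S' ∪ Set.Ici f, ∀ b, f ≤ b → a + b ∈ S' ∪ Set.Ici f := by
    intro a ha b hb
    by_cases ha0 : a = 0
    · exact Or.inr (by simpa [ha0] using hb)
    have ha1 : 1 ≤ a.1 ∧ 1 ≤ a.2 := by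
      rcases ha with ha | ha
      · exact hl'.one_le_of_mem hS'.1 ha ha0
      · rw [Set.mem_Ici, Prod.le_def] at ha
        omega
    rw [Prod.le_def] at hb
    exact Or.inl (hc _ (by simp only [Prod.fst_add]; omega) (by simp only [Prod.snd_add]; omega))
  rcases hb with hb | hb
  · rcases ha with ha | ha
    · exact Or.inl (hS'.2.2.1 a ha b hb)
    · rw [add_comm]
      exact hadd b (Or.inl hb) a ha
  · exact hadd a ha b hb

lemma g3P_union_Ici (hS' : IsGood S') (hf : frobeniusVec S' ∈ S') :
    G3P (S' ∪ Set.Ici (frobeniusVec S')) := by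
  set f := frobeniusVec S'
  have hc : ∀ z : Z2, f.1 < z.1 → f.2 < z.2 → z ∈ S' := fun _ => hS'.mem_of_frobeniusVec_lt
  refine G3P.of_exists (fun a ha b hb h1 h2 => ?_) (fun a ha b hb h2 h1 => ?_)
  · by_cases hfa : f ≤ a
    · exact ⟨(a.1 + 1, a.2), Or.inr (Prod.le_def.2 ⟨by dsimp only; have := hfa.1; omega, hfa.2⟩),
        by dsimp only; omega, rfl⟩
    have ha' : a ∈ S' := ha.resolve_right hfa
    obtain ⟨b', hb', hb'1, hb'2⟩ : ∃ b' ∈ S', b'.1 = a.1 ∧ a.2 < b'.2 := by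
      rcases hb with hb | hb
      · exact ⟨b, hb, h1.symm, h2⟩
      simp only [Set.mem_Ici, Prod.le_def] at hb hfa
      rcases (show f.1 ≤ a.1 by omega).eq_or_lt with h | h
      · exact ⟨f, hf, h, by omega⟩
      · exact ⟨(a.1, f.2 + 1), hc _ h (by dsimp only; omega), rfl, by dsimp only; omega⟩
    obtain ⟨e, he, he1, he2⟩ := hS'.2.2.2.2.2.exists_right ha' hb' hb'1.symm hb'2
    exact ⟨e, Or.inl he, he1, he2⟩
  · by_cases hfa : f ≤ a
    · exact ⟨(a.1, a.2 + 1), Or.inr (Prod.le_def.2 ⟨hfa.1, by dsimp only; have := hfa.2; omega⟩),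
        by dsimp only; omega, rfl⟩
    have ha' : a ∈ S' := ha.resolve_right hfa
    obtain ⟨b', hb', hb'2, hb'1⟩ : ∃ b' ∈ S', b'.2 = a.2 ∧ a.1 < b'.1 := by
      rcases hb with hb | hb
      · exact ⟨b, hb, h2.symm, h1⟩
      simp only [Set.mem_Ici, Prod.le_def] at hb hfa
      rcases (show f.2 ≤ a.2 by omega).eq_or_lt with h | h
      · exact ⟨f, hf, h, by omega⟩
      · exact ⟨(f.1 + 1, a.2), hc _ (by dsimp only; omega) h, rfl, by dsimp only; omega⟩
    obtain ⟨e, he, he2, he1⟩ := hS'.2.2.2.2.2.exists_above ha' hb' hb'2.symm hb'1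
    exact ⟨e, Or.inl he, he2, he1⟩

lemma isGood_union_Ici (hS' : IsGood S') (hl' : IsLocal S') (hf : frobeniusVec S' ∈ S')
    (hf0 : frobeniusVec S' ≠ 0) : IsGood (S' ∪ Set.Ici (frobeniusVec S')) := by
  refine ⟨?_, Or.inl hS'.2.1, fun a ha b hb => add_mem_union_Ici hS' hl' hf hf0 ha hb,
    fun a ha b hb => inf_mem_union_Ici hS' hf ha hb, ⟨_, fun y hy => Or.inr hy⟩,
    g3P_union_Ici hS' hf⟩
  rintro a (ha | ha)
  · exact hS'.1 ha
  · obtain ⟨h1, h2⟩ := hS'.1 hf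
    exact ⟨h1.trans ha.1, h2.trans ha.2⟩

lemma isLocal_union_Ici (hS' : IsGood S') (hl' : IsLocal S') (hf : frobeniusVec S' ∈ S')
    (hf0 : frobeniusVec S' ≠ 0) : IsLocal (S' ∪ Set.Ici (frobeniusVec S')) := by
  have hf1 := hl'.one_le_of_mem hS'.1 hf hf0
  rintro a (ha | ha) h0
  · exact hl' a ha h0
  · rw [Set.mem_Ici, Prod.le_def] at ha
    omega

lemma condE_union_Ici_le (hS' : IsGood S') (hf : frobeniusVec S' ∈ S') :
    condE (S' ∪ Set.Ici (frobeniusVec S')) ≤ frobeniusVec S' := by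
  refine condE_le_of_forall_le_mem ?_ fun y hy => Or.inr hy
  rintro a (ha | ha)
  · exact hS'.1 ha
  · obtain ⟨h1, h2⟩ := hS'.1 hf
    exact ⟨h1.trans ha.1, h2.trans ha.2⟩

lemma iotaZ_mem_ISet_union_Ici (hS' : IsGood S') (hl' : IsLocal S') (hf : frobeniusVec S' ∈ S')
    (hf0 : frobeniusVec S' ≠ 0) {s : Z2} (hs : s ∈ DeltaUp (frobeniusVec S')) :
    iotaZ s ∈ ISet (S' ∪ Set.Ici (frobeniusVec S')) := by
  set f := frobeniusVec S'
  have hU := isGood_union_Ici hS' hl' hf hf0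
  have hUl := isLocal_union_Ici hS' hl' hf hf0
  have hf1 := hl'.one_le_of_mem hS'.1 hf hf0
  have hsf : f ≤ s := Prod.le_def.2 (by rcases hs with h | h <;> omega)
  refine ⟨Or.inl ⟨s, Or.inr hsf, rfl⟩, fun h => ?_, fun β hβ γ hγ h => ?_⟩
  · have := congrArg Prod.fst h
    simp only [iotaZ, Prod.fst_zero, WithTop.coe_eq_zero] at this
    have := hsf.1
    omega
  obtain ⟨u, hu, v, hv, rfl, rfl, rfl⟩ := exists_eq_add_of_iotaZ_eq_add hβ hγ h
  by_cases hu0 : u = 0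
  · simp [hu0]
  by_cases hv0 : v = 0
  · simp [hv0]
  -- Both summands are positive, so each lies below `f` in one coordinate, hence in `S'`.
  have hu1 := hUl.one_le_of_mem hU.1 hu hu0
  have hv1 := hUl.one_le_of_mem hU.1 hv hv0
  have hlt : ∀ w ∈ S' ∪ Set.Ici f, (w.1 < f.1 ∨ w.2 < f.2) → w ∈ S' := fun w hw hwf =>
    hw.resolve_right fun h => by rw [Set.mem_Ici, Prod.le_def] at h; omega
  have hsum : u + v ∈ S' := by
    have : (u.1 < f.1 ∧ v.1 < f.1) ∨ (u.2 < f.2 ∧ v.2 < f.2) := by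
      rcases hs with ⟨h, -⟩ | ⟨h, -⟩ <;> simp only [Prod.fst_add, Prod.snd_add] at h <;> omega
    exact hS'.2.2.1 _ (hlt u hu (by omega)) _ (hlt v hv (by omega))
  exact absurd hs (Set.disjoint_left.1 hS'.disjoint_deltaUp_frobeniusVec hsum)

lemma fst_top_mem_IA_union_Ici (hS' : IsGood S') (hl' : IsLocal S') (hf : frobeniusVec S' ∈ S')
    (hf0 : frobeniusVec S' ≠ 0) :
    (((frobeniusVec S').1 : WithTop ℤ), ⊤) ∈ IA (S' ∪ Set.Ici (frobeniusVec S')) := by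
  set f := frobeniusVec S'
  set U := S' ∪ Set.Ici f
  have hU : IsGood U := isGood_union_Ici hS' hl' hf hf0
  have hUl : IsLocal U := isLocal_union_Ici hS' hl' hf hf0
  have hinf : ((f.1 : WithTop ℤ), ⊤) ∈ Sinf U :=
    Or.inl ⟨f.1, rfl, mem_of_condE_le hU ⟨(condE_union_Ici_le hS' hf).1, le_rfl⟩⟩
  refine ⟨⟨Or.inr hinf, fun h => by simpa using congrArg Prod.snd h, fun β hβ γ hγ h => ?_⟩,
    Or.inr hinf⟩
  wlog hβ2 : β.2 = ⊤ generalizing β γ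
  · have hγ2 : γ.2 = ⊤ := (WithTop.add_eq_top.1 (congrArg Prod.snd h).symm).resolve_left hβ2
    exact (this γ hγ β hβ (h.trans (add_comm β γ)) hγ2).symm
  by_cases hγ0 : γ = 0
  · left
    rw [h, hγ0, add_zero]
  exfalso
  obtain ⟨p, q, hp, hq, hpq⟩ := WithTop.add_eq_coe.1 (congrArg Prod.fst h).symm
  -- `β = (p, ∞)` puts a whole column `p` into `U` and `γ` a positive element into column `q`;
  -- a sum of the two lands in `Δ(f) ∩ S'`.
  obtain ⟨y, hy, hy0⟩ := hU.exists_mk_mem_ne_zero_of_mem_Gam_of_fst_eq hγ hγ0 hq.symm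
  have hY := hU.mem_column_of_le (mk_mem_of_mem_Gam_of_snd_eq_top hβ hp.symm hβ2) le_rfl
    (le_max_left _ (f.2 + 1))
  have hf1 := hl'.one_le_of_mem hS'.1 hf hf0
  obtain ⟨hq1, hy1⟩ : 1 ≤ q ∧ 1 ≤ y := hUl.one_le_of_mem hU.1 hy hy0
  obtain ⟨hp1, -⟩ := hUl.one_le_of_mem hU.1 hY (ne_of_apply_ne Prod.snd (by simp; omega))
  have hlt : ∀ w ∈ U, w.1 < f.1 → w ∈ S' := fun w hw hwf =>
    hw.resolve_right fun h => by rw [Set.mem_Ici, Prod.le_def] at h; omega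
  have hsum := hS'.2.2.1 _ (hlt _ hY (by dsimp only at hp1 ⊢; omega)) _ (hlt _ hy (by omega))
  have hΔ : Disjoint S' (DeltaUp f) := hS'.disjoint_deltaUp_frobeniusVec
  refine Set.disjoint_left.1 hΔ hsum (Or.inl ⟨?_, ?_⟩) <;>
    simp only [Prod.fst_add, Prod.snd_add] <;> omega

lemma top_snd_mem_IA_union_Ici (hS' : IsGood S') (hl' : IsLocal S') (hf : frobeniusVec S' ∈ S')
    (hf0 : frobeniusVec S' ≠ 0) :
    ((⊤ : WithTop ℤ), ((frobeniusVec S').2 : WithTop ℤ)) ∈ IA (S' ∪ Set.Ici (frobeniusVec S')) := by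
  set f := frobeniusVec S'
  set U := S' ∪ Set.Ici f
  have hU : IsGood U := isGood_union_Ici hS' hl' hf hf0
  have hUl : IsLocal U := isLocal_union_Ici hS' hl' hf hf0
  have hinf : ((⊤ : WithTop ℤ), (f.2 : WithTop ℤ)) ∈ Sinf U :=
    Or.inr ⟨f.2, rfl, mem_of_condE_le hU ⟨le_rfl, (condE_union_Ici_le hS' hf).2⟩⟩
  refine ⟨⟨Or.inr hinf, fun h => by simpa using congrArg Prod.fst h, fun β hβ γ hγ h => ?_⟩,
    Or.inr hinf⟩
  wlog hβ1 : β.1 = ⊤ generalizing β γ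
  · have hγ1 : γ.1 = ⊤ := (WithTop.add_eq_top.1 (congrArg Prod.fst h).symm).resolve_left hβ1
    exact (this γ hγ β hβ (h.trans (add_comm β γ)) hγ1).symm
  by_cases hγ0 : γ = 0
  · left
    rw [h, hγ0, add_zero]
  exfalso
  obtain ⟨p, q, hp, hq, hpq⟩ := WithTop.add_eq_coe.1 (congrArg Prod.snd h).symm
  obtain ⟨x, hx, hx0⟩ := hU.exists_mk_mem_ne_zero_of_mem_Gam_of_snd_eq hγ hγ0 hq.symm
  have hX := hU.mem_row_of_le (mk_mem_of_mem_Gam_of_fst_eq_top hβ hβ1 hp.symm) le_rfl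
    (le_max_left _ (f.1 + 1))
  have hf1 := hl'.one_le_of_mem hS'.1 hf hf0
  obtain ⟨hx1, hq1⟩ : 1 ≤ x ∧ 1 ≤ q := hUl.one_le_of_mem hU.1 hx hx0
  obtain ⟨-, hp1⟩ := hUl.one_le_of_mem hU.1 hX (ne_of_apply_ne Prod.fst (by simp; omega))
  have hlt : ∀ w ∈ U, w.2 < f.2 → w ∈ S' := fun w hw hwf =>
    hw.resolve_right fun h => by rw [Set.mem_Ici, Prod.le_def] at h; omega
  have hsum := hS'.2.2.1 _ (hlt _ hX (by dsimp only at hp1 ⊢; omega)) _ (hlt _ hx (by omega))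
  have hΔ : Disjoint S' (DeltaUp f) := hS'.disjoint_deltaUp_frobeniusVec
  refine Set.disjoint_left.1 hΔ hsum (Or.inr ⟨?_, ?_⟩) <;>
    simp only [Prod.fst_add, Prod.snd_add] <;> omega

lemma specialParent_union_deltaUp (hS' : IsGood S') (hl' : IsLocal S') (hf : frobeniusVec S' ∈ S')
    (hf0 : frobeniusVec S' ≠ 0) : SpecialParent (S' ∪ DeltaUp (frobeniusVec S')) S' := by
  set f := frobeniusVec S'
  set U := S' ∪ Set.Ici f
  have hUeq : S' ∪ DeltaUp f = U := union_deltaUp_frobeniusVec_eq_union_Ici hS' hf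
  rw [hUeq]
  have hU : IsGood U := isGood_union_Ici hS' hl' hf hf0
  have hcU : condE U ≤ f := condE_union_Ici_le hS' hf
  have hΔU : DeltaUp f ⊆ U := fun s hs => Or.inr (Prod.le_def.2 (by rcases hs with h | h <;> omega))
  set α : ℕ → Om := fun i => if i = 0 then ((f.1 : WithTop ℤ), ⊤) else (⊤, (f.2 : WithTop ℤ))
  have hα0 : α 0 = ((f.1 : WithTop ℤ), ⊤) := rfl
  have hα1 : α 1 = (⊤, (f.2 : WithTop ℤ)) := rfl
  have hT : trackSet U 2 α = DeltaUp f := by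
    rw [trackSet_two_eq hα0 hα1, Prod.mk.eta, Set.inter_eq_right.2 hΔU]
  have hpiece : Piece U (α 0) (α 1) := by
    refine ⟨by simp [hα0, hα1], by simp [hα0, hα1], fun s _ hs => ?_⟩
    have : α 0 ⊓ α 1 = iotaZ f := Prod.ext (by simp [hα0, hα1, iotaZ]) (by simp [hα0, hα1, iotaZ])
    rw [this, upD_iotaZ] at hs
    exact iotaZ_mem_ISet_union_Ici hS' hl' hf hf0 hs
  have hdata : TrackData U 2 α := by
    refine ⟨one_le_two, fun i hi => ?_, fun i j hij hj => ?_, fun s _ hs => ?_, fun s _ hs => ?_,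
      fun i hi => ?_⟩
    · interval_cases i
      · exact fst_top_mem_IA_union_Ici hS' hl' hf hf0
      · exact top_snd_mem_IA_union_Ici hS' hl' hf hf0
    · obtain ⟨rfl, rfl⟩ : i = 0 ∧ j = 1 := by omega
      simp [hα0, hα1]
    · simp [lowD2, hα0] at hs
    · simp [lowD1, hα1] at hs
    · obtain rfl : i = 0 := by omega
      exact hpiece
  have hbeyond : (f.1, f.2 + 1) ∈ DeltaUp f := Or.inl ⟨rfl, by omega⟩
  refine ⟨hU, isLocal_union_Ici hS' hl' hf hf0, DeltaUp f,
    ⟨⟨2, α, hdata, hT.symm⟩, _, hbeyond, hΔU hbeyond, hcU.trans ?_⟩, ?_⟩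
  · exact Prod.le_def.2 ⟨le_rfl, by omega⟩
  · rw [← hUeq, Set.union_sdiff_right, sdiff_eq_left.2 hS'.disjoint_deltaUp_frobeniusVec]

end Parent

section Uniqueness

variable {S S' : Set Z2}

lemma eq_union_deltaUp_of_eq_diff_row (hS : IsGood S) (hS' : IsGood S')
    (hf : frobeniusVec S' ∈ S') {K : ℤ} (hSS' : S' = S \ DeltaUp (K, (frobeniusVec S').2))
    (hK : (K, (condE S).2) ∈ S) (hcc : condE S ≤ condE S') (hc2 : (condE S).2 < (condE S').2) :
    S = S' ∪ DeltaUp (frobeniusVec S') := by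
  set f := frobeniusVec S'
  have hΔ : Disjoint S' (DeltaUp f) := hS'.disjoint_deltaUp_frobeniusVec
  have hf1 : f.1 = (condE S').1 - 1 := rfl
  have hf2 : f.2 = (condE S').2 - 1 := rfl
  have hcc1 := hcc.1
  have hmem : ∀ p ∈ S, p ∉ DeltaUp (K, f.2) → p ∈ S' := fun p hp hpK => by
    rw [hSS']
    exact ⟨hp, hpK⟩
  have hKlt : K < (condE S').1 := by
    have hp : ((condE S').1, f.2) ∈ S := mk_mem_of_condE_le hS hcc1 (by omega)
    have hpS' : ((condE S').1, f.2) ∉ S' :=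
      Set.disjoint_right.1 hΔ (Or.inr ⟨rfl, by dsimp only; omega⟩)
    have hpK : ((condE S').1, f.2) ∈ DeltaUp (K, f.2) := by
      by_contra h
      exact hpS' (hmem _ hp h)
    rcases hpK with ⟨-, h⟩ | ⟨-, h⟩ <;> dsimp only at h <;> omega
  -- If `K < f₁`, then `(K, f₂) ∈ S'` and (G3) for it and `f` gives a point of `Δ(K, f₂)` in `S'`.
  have hKf : K = f.1 := by
    by_contra hne
    have hKS : (K, f.2) ∈ S' :=
      hmem _ (hS.mem_column_of_le hK le_rfl (by omega)) (by simp [DeltaUp])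
    obtain ⟨e, he, he2, he1⟩ := hS'.2.2.2.2.2.exists_above hKS hf rfl (by dsimp only; omega)
    rw [hSS'] at he
    exact he.2 (Or.inl ⟨he1, he2⟩)
  have hΔS : DeltaUp f ⊆ S := by
    rintro ⟨x, y⟩ (⟨hx, hy⟩ | ⟨hy, hx⟩) <;> dsimp only at hx hy
    · rw [hx, ← hKf]
      exact hS.mem_column_of_le hK le_rfl (by omega)
    · exact mk_mem_of_condE_le hS (by omega) (by omega)
  calc S = S \ DeltaUp f ∪ DeltaUp f := by rw [Set.sdiff_union_self, Set.union_eq_left.2 hΔS]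
    _ = S' ∪ DeltaUp f := by rw [hSS', hKf]

lemma eq_union_deltaUp_of_eq_diff_column (hS : IsGood S) (hS' : IsGood S')
    (hf : frobeniusVec S' ∈ S') {K : ℤ} (hSS' : S' = S \ DeltaUp ((frobeniusVec S').1, K))
    (hK : ((condE S).1, K) ∈ S) (hcc : condE S ≤ condE S') (hc1 : (condE S).1 < (condE S').1) :
    S = S' ∪ DeltaUp (frobeniusVec S') := by
  set f := frobeniusVec S'
  have hΔ : Disjoint S' (DeltaUp f) := hS'.disjoint_deltaUp_frobeniusVec
  have hf1 : f.1 = (condE S').1 - 1 := rfl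
  have hf2 : f.2 = (condE S').2 - 1 := rfl
  have hcc2 := hcc.2
  have hmem : ∀ p ∈ S, p ∉ DeltaUp (f.1, K) → p ∈ S' := fun p hp hpK => by
    rw [hSS']
    exact ⟨hp, hpK⟩
  have hKlt : K < (condE S').2 := by
    have hp : (f.1, (condE S').2) ∈ S := mk_mem_of_condE_le hS (by omega) hcc2
    have hpS' : (f.1, (condE S').2) ∉ S' :=
      Set.disjoint_right.1 hΔ (Or.inl ⟨rfl, by dsimp only; omega⟩)
    have hpK : (f.1, (condE S').2) ∈ DeltaUp (f.1, K) := by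
      by_contra h
      exact hpS' (hmem _ hp h)
    rcases hpK with ⟨-, h⟩ | ⟨-, h⟩ <;> dsimp only at h <;> omega
  have hKf : K = f.2 := by
    by_contra hne
    have hKS : (f.1, K) ∈ S' :=
      hmem _ (hS.mem_row_of_le hK le_rfl (by omega)) (by simp [DeltaUp])
    obtain ⟨e, he, he1, he2⟩ := hS'.2.2.2.2.2.exists_right hKS hf rfl (by dsimp only; omega)
    rw [hSS'] at he
    exact he.2 (Or.inr ⟨he2, he1⟩)
  have hΔS : DeltaUp f ⊆ S := by
    rintro ⟨x, y⟩ (⟨hx, hy⟩ | ⟨hy, hx⟩) <;> dsimp only at hx hy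
    · exact mk_mem_of_condE_le hS (by omega) (by omega)
    · rw [hy, ← hKf]
      exact hS.mem_row_of_le hK le_rfl (by omega)
  calc S = S \ DeltaUp f ∪ DeltaUp f := by rw [Set.sdiff_union_self, Set.union_eq_left.2 hΔS]
    _ = S' ∪ DeltaUp f := by rw [hSS', hKf]

lemma eq_union_deltaUp_of_specialParent (hS' : IsGood S') (hf : frobeniusVec S' ∈ S')
    (hpar : SpecialParent S S') : S = S' ∪ DeltaUp (frobeniusVec S') := by
  obtain ⟨hS, -, T, ⟨⟨n, α, hα, rfl⟩, t, htT, -, htc⟩, hSS'⟩ := hpar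
  set f := frobeniusVec S'
  have hf1 : f.1 = (condE S').1 - 1 := rfl
  have hf2 : f.2 = (condE S').2 - 1 := rfl
  have hcc : condE S ≤ condE S' := condE_le_condE_of_subset hS' (hSS' ▸ Set.sdiff_subset) hS.1
  have hcc1 := hcc.1
  have hcc2 := hcc.2
  have hne : condE S ≠ condE S' := fun h => by
    have ht := mem_of_condE_le hS' (h ▸ htc)
    rw [hSS'] at ht
    exact ht.2 htT
  have hT : ∀ p ∈ DeltaUp f, condE S ≤ p → p ∈ trackSet S n α := fun p hp hpc => by
    by_contra h
    have hp' : p ∈ S' := by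
      rw [hSS']
      exact ⟨mem_of_condE_le hS hpc, h⟩
    exact Set.disjoint_left.1 hS'.disjoint_deltaUp_frobeniusVec hp' hp
  have hfT : (f.1, f.2) ∈ S \ trackSet S n α := hSS' ▸ hf
  rcases hcc2.lt_or_eq with hc2 | hc2
  · have hlast := hα.last_eq_of_row_subset hS (b := f.2) (x₀ := (condE S').1) (by omega)
      fun x hx => hT _ (Or.inr ⟨rfl, by dsimp only; omega⟩) ⟨by dsimp only; omega, by omega⟩
    obtain ⟨rfl, K, h0⟩ := hα.two_points_of_last hS (by omega) hlast hfT
    have hGam0 := (hα.2.1 0 two_pos).1.1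
    rw [trackSet_two_eq h0 hlast, Set.sdiff_self_inter] at hSS'
    exact eq_union_deltaUp_of_eq_diff_row hS hS' hf hSS'
      (mk_mem_of_mem_Gam_of_snd_eq_top hGam0 (by rw [h0]) (by rw [h0])) hcc hc2
  · have hc1 : (condE S).1 < (condE S').1 := lt_of_le_of_ne hcc1 fun h1 => hne (Prod.ext h1 hc2)
    have hfirst := hα.first_eq_of_column_subset hS (a := f.1) (y₀ := (condE S').2) (by omega)
      fun y hy => hT _ (Or.inl ⟨rfl, by dsimp only; omega⟩) ⟨by omega, by dsimp only; omega⟩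
    obtain ⟨rfl, K, h1⟩ := hα.two_points_of_first hS (by omega) hfirst hfT
    have hGam1 := (hα.2.1 1 (by omega)).1.1
    rw [trackSet_two_eq hfirst h1, Set.sdiff_self_inter] at hSS'
    exact eq_union_deltaUp_of_eq_diff_column hS hS' hf hSS'
      (mk_mem_of_mem_Gam_of_fst_eq_top hGam1 (by rw [h1]) (by rw [h1])) hcc hc1

end Uniqueness

/-- If `S' ≠ ℕ²(1,1)` is a local good semigroup whose
Frobenius vector `f(S') = c(S') − (1,1)` belongs to `S'`, then `S'` has
exactly one special parent, namely `S = S' ∪ Δ(f(S'))`. -/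
theorem unique_specialParent_of_frobenius_mem (S' : Set Z2) (hS' : IsGood S')
    (hl' : IsLocal S') (hne : S' ≠ N2oneone)
    (hf : condE S' - ((1 : ℤ), (1 : ℤ)) ∈ S') :
    ∀ S : Set Z2, SpecialParent S S' ↔
      S = S' ∪ DeltaUp (condE S' - ((1 : ℤ), (1 : ℤ))) := by
  intro S
  refine ⟨eq_union_deltaUp_of_specialParent hS' hf, ?_⟩
  rintro rfl
  exact specialParent_union_deltaUp hS' hl' hf (hS'.frobeniusVec_ne_zero hl' hne)
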